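/- Let d ≥ 1. There exists a constant C > 0, depending only on d, such that for all r > 0 and all ℓ ∈ ℤ^d with |ℓ| ≥ 2r, one has ∑_{k ∈ ℤ^d} (1 + |k|)^{-d} (1 + |ℓ − k|)^{-d} ≤ C (1 + r)^{-d} log(2 + r). -/

import Mathlib

/-!
Split `ℤ^d` according to which of `|k|`, `|ℓ - k|` is smaller. If `|k| ≤ |ℓ - k|` then
`|ℓ - k| ≥ max(|k|, |ℓ|/2) ≥ max(|k|, r)`, so each term is at most
`ψ(|k|) + ψ(|ℓ - k|)` with `ψ(x) = (1 + x)^{-d} (1 + max(x, r))^{-d}`, a decreasing radial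
function. Summing a decreasing radial function over the `ℓ^∞`-shells of `ℤ^d`, which have
`O(n^{d-1})` points, reduces everything to `∑_n (1 + n)^{-1} (1 + max(n, r))^{-d}`: the part
`n ≤ r` is a harmonic sum, giving `(1 + r)^{-d} log(2 + r)`, and the tail `n > r` is
`O((1 + r)^{-d})`.
-/

/-- The Euclidean norm of a lattice point `ℓ ∈ ℤ^d`. -/
noncomputable def znorm {d : ℕ} (ℓ : Fin d → ℤ) : ℝ :=
  Real.sqrt (∑ i, ((ℓ i : ℝ)) ^ 2)

open Finset

section Euclidean

variable {d : ℕ}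

lemma znorm_eq_norm (k : Fin d → ℤ) :
    znorm k = ‖(WithLp.toLp 2 fun i => (k i : ℝ) : EuclideanSpace ℝ (Fin d))‖ := by
  simp [znorm, EuclideanSpace.norm_eq]

lemma znorm_nonneg (k : Fin d → ℤ) : 0 ≤ znorm k := Real.sqrt_nonneg _

lemma znorm_add_le (a b : Fin d → ℤ) : znorm (a + b) ≤ znorm a + znorm b := by
  have hcast : (WithLp.toLp 2 fun i => ((a + b) i : ℝ) : EuclideanSpace ℝ (Fin d)) =
      WithLp.toLp 2 (fun i => (a i : ℝ)) + WithLp.toLp 2 fun i => (b i : ℝ) := by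
    ext i
    simp
  simpa only [znorm_eq_norm, hcast] using norm_add_le _ _

lemma norm_le_znorm (k : Fin d → ℤ) : ‖k‖ ≤ znorm k := by
  refine (pi_norm_le_iff_of_nonneg (znorm_nonneg k)).2 fun i => ?_
  rw [Int.norm_eq_abs, znorm]
  exact Real.abs_le_sqrt (single_le_sum (f := fun j => ((k j : ℝ)) ^ 2)
    (fun j _ => sq_nonneg _) (mem_univ i))

end Euclidean

noncomputable def radialMajorant (p r x : ℝ) : ℝ := (1 + x) ^ (-p) * (1 + max x r) ^ (-p)

section Radial

variable {p r : ℝ}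

lemma radialMajorant_nonneg {x : ℝ} (hx : 0 ≤ x) : 0 ≤ radialMajorant p r x := by
  unfold radialMajorant
  have : 0 ≤ max x r := hx.trans (le_max_left x r)
  positivity

lemma antitoneOn_radialMajorant (hp : 0 ≤ p) : AntitoneOn (radialMajorant p r) (Set.Ici 0) := by
  intro x hx y hy hxy
  have hx : 0 ≤ x := hx
  have hmax0 : 0 ≤ max x r := hx.trans (le_max_left x r)
  have hmax : max x r ≤ max y r := max_le_max_right r hxy
  exact mul_le_mul (Real.rpow_le_rpow_of_nonpos (by linarith) (by linarith) (by linarith))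
    (Real.rpow_le_rpow_of_nonpos (by positivity) (by linarith) (by linarith))
    (Real.rpow_nonneg (by linarith) _) (Real.rpow_nonneg (by linarith) _)

lemma rpow_neg_mul_rpow_neg_le_radialMajorant_add {x y : ℝ} (hp : 0 ≤ p) (hx : 0 ≤ x)
    (hy : 0 ≤ y) (hxy : 2 * r ≤ x + y) :
    (1 + x) ^ (-p) * (1 + y) ^ (-p) ≤ radialMajorant p r x + radialMajorant p r y := by
  wlog h : x ≤ y generalizing x y
  · rw [mul_comm, add_comm (radialMajorant p r x)]
    exact this hy hx (by linarith) (by linarith)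
  have hmax : max x r ≤ y := max_le h (by linarith)
  have hmax0 : 0 ≤ max x r := hx.trans (le_max_left x r)
  calc (1 + x) ^ (-p) * (1 + y) ^ (-p) ≤ radialMajorant p r x := by
        unfold radialMajorant
        exact mul_le_mul_of_nonneg_left
          (Real.rpow_le_rpow_of_nonpos (by positivity) (by linarith) (by linarith)) (by positivity)
    _ ≤ radialMajorant p r x + radialMajorant p r y :=
        le_add_of_nonneg_right (radialMajorant_nonneg hy)

end Radial

lemma sum_inv_one_add_le_one_add_log {r : ℝ} (hr : 0 ≤ r) (s : Finset ℕ)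
    (hs : ∀ m ∈ s, (m : ℝ) ≤ r) : ∑ m ∈ s, (1 + (m : ℝ))⁻¹ ≤ 1 + Real.log (1 + r) := by
  have hsub : s ⊆ range ⌊1 + r⌋₊ := by
    intro m hm
    rw [mem_range, add_comm, Nat.floor_add_one hr, Nat.lt_succ_iff]
    exact Nat.le_floor (hs m hm)
  calc ∑ m ∈ s, (1 + (m : ℝ))⁻¹ ≤ ∑ m ∈ range ⌊1 + r⌋₊, (1 + (m : ℝ))⁻¹ :=
        sum_le_sum_of_subset_of_nonneg hsub fun _ _ _ => by positivity
    _ = harmonic ⌊1 + r⌋₊ := by simp [harmonic, add_comm]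
    _ ≤ 1 + Real.log (1 + r) := harmonic_floor_le_one_add_log _ (by linarith)

lemma sum_inv_one_add_sq_le {r : ℝ} (hr : 0 ≤ r) (s : Finset ℕ)
    (hs : ∀ m ∈ s, r < m) : ∑ m ∈ s, ((1 + (m : ℝ)) ^ 2)⁻¹ ≤ 2 / (1 + r) := by
  have hsub : s.image (· + 1) ⊆ Ioo (⌊r⌋₊ + 1) (s.sup id + 2) := by
    intro i hi
    obtain ⟨m, hm, rfl⟩ := mem_image.1 hi
    have h1 : ⌊r⌋₊ < m := Nat.floor_lt hr |>.2 (hs m hm)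
    have h2 : m ≤ s.sup id := le_sup (f := id) hm
    rw [mem_Ioo]
    omega
  calc ∑ m ∈ s, ((1 + (m : ℝ)) ^ 2)⁻¹ = ∑ i ∈ s.image (· + 1), (((i : ℕ) : ℝ) ^ 2)⁻¹ := by
        rw [sum_image fun _ _ _ _ h => Nat.succ_injective h]
        simp [add_comm]
    _ ≤ ∑ i ∈ Ioo (⌊r⌋₊ + 1) (s.sup id + 2), (((i : ℕ) : ℝ) ^ 2)⁻¹ :=
        sum_le_sum_of_subset_of_nonneg hsub fun _ _ _ => by positivity
    _ ≤ 2 / ((⌊r⌋₊ + 1 : ℕ) + 1) := sum_Ioo_inv_sq_le _ _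
    _ ≤ 2 / (1 + r) := by
        refine div_le_div_of_nonneg_left (by norm_num) (by positivity) ?_
        push_cast
        linarith [Nat.lt_floor_add_one r]

lemma pow_pred_mul_rpow_neg {a : ℝ} (ha : 0 < a) {d : ℕ} (hd : 1 ≤ d) :
    a ^ (d - 1) * a ^ (-(d : ℝ)) = a⁻¹ := by
  rw [← Real.rpow_natCast, ← Real.rpow_add ha, Nat.cast_sub hd, ← Real.rpow_neg_one]
  congr 1
  push_cast
  ring

lemma sum_inv_mul_rpow_neg_max_le_of_le {d : ℕ} {r : ℝ} (hr : 0 ≤ r) (s : Finset ℕ)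
    (hs : ∀ m ∈ s, (m : ℝ) ≤ r) :
    ∑ m ∈ s, (1 + (m : ℝ))⁻¹ * (1 + max (m : ℝ) r) ^ (-(d : ℝ)) ≤
      (1 + Real.log (1 + r)) * (1 + r) ^ (-(d : ℝ)) := by
  calc ∑ m ∈ s, (1 + (m : ℝ))⁻¹ * (1 + max (m : ℝ) r) ^ (-(d : ℝ))
      = (∑ m ∈ s, (1 + (m : ℝ))⁻¹) * (1 + r) ^ (-(d : ℝ)) := by
        rw [sum_mul]
        exact sum_congr rfl fun m hm => by rw [max_eq_right (hs m hm)]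
    _ ≤ (1 + Real.log (1 + r)) * (1 + r) ^ (-(d : ℝ)) := by
        gcongr
        exact sum_inv_one_add_le_one_add_log hr s hs

lemma sum_inv_mul_rpow_neg_max_le_of_lt {d : ℕ} (hd : 1 ≤ d) {r : ℝ} (hr : 0 ≤ r)
    (s : Finset ℕ) (hs : ∀ m ∈ s, r < m) :
    ∑ m ∈ s, (1 + (m : ℝ))⁻¹ * (1 + max (m : ℝ) r) ^ (-(d : ℝ)) ≤
      2 * (1 + r) ^ (-(d : ℝ)) := by
  have hdecay {m : ℕ} (hm : r < m) : (1 + (m : ℝ))⁻¹ * (1 + max (m : ℝ) r) ^ (-(d : ℝ)) ≤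
      ((1 + (m : ℝ)) ^ 2)⁻¹ * (1 + r) ^ (1 - (d : ℝ)) := by
    have hm1 : (0 : ℝ) < 1 + m := by positivity
    calc (1 + (m : ℝ))⁻¹ * (1 + max (m : ℝ) r) ^ (-(d : ℝ))
        = ((1 + (m : ℝ)) ^ 2)⁻¹ * (1 + (m : ℝ)) ^ (1 - (d : ℝ)) := by
          rw [max_eq_left hm.le, sub_eq_add_neg, Real.rpow_add hm1, Real.rpow_one]
          field_simp
      _ ≤ ((1 + (m : ℝ)) ^ 2)⁻¹ * (1 + r) ^ (1 - (d : ℝ)) := by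
          refine mul_le_mul_of_nonneg_left (Real.rpow_le_rpow_of_nonpos (by linarith)
            (by linarith) ?_) (by positivity)
          linarith [(Nat.one_le_cast (α := ℝ)).2 hd]
  calc ∑ m ∈ s, (1 + (m : ℝ))⁻¹ * (1 + max (m : ℝ) r) ^ (-(d : ℝ))
      ≤ (∑ m ∈ s, ((1 + (m : ℝ)) ^ 2)⁻¹) * (1 + r) ^ (1 - (d : ℝ)) := by
        rw [sum_mul]
        exact sum_le_sum fun m hm => hdecay (hs m hm)
    _ ≤ 2 / (1 + r) * (1 + r) ^ (1 - (d : ℝ)) := by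
        gcongr
        exact sum_inv_one_add_sq_le hr s hs
    _ = 2 * (1 + r) ^ (-(d : ℝ)) := by
        rw [Real.rpow_sub (by linarith), Real.rpow_one, Real.rpow_neg (by linarith)]
        field_simp

lemma sum_pow_mul_radialMajorant_le {d : ℕ} (hd : 1 ≤ d) {r : ℝ} (hr : 0 ≤ r)
    (s : Finset ℕ) :
    ∑ m ∈ s, (1 + (m : ℝ)) ^ (d - 1) * radialMajorant d r m ≤
      6 * (1 + r) ^ (-(d : ℝ)) * Real.log (2 + r) := by
  have hterm (m : ℕ) : (1 + (m : ℝ)) ^ (d - 1) * radialMajorant d r m =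
      (1 + (m : ℝ))⁻¹ * (1 + max (m : ℝ) r) ^ (-(d : ℝ)) := by
    rw [radialMajorant, ← mul_assoc, pow_pred_mul_rpow_neg (by positivity) hd]
  have hlog : 3 + Real.log (1 + r) ≤ 6 * Real.log (2 + r) := by
    have h2 : Real.log 2 ≤ Real.log (2 + r) := Real.log_le_log (by norm_num) (by linarith)
    have h1 : Real.log (1 + r) ≤ Real.log (2 + r) := Real.log_le_log (by linarith) (by linarith)
    linarith [Real.log_two_gt_d9]
  have hrpow : 0 ≤ (1 + r) ^ (-(d : ℝ)) := Real.rpow_nonneg (by linarith) _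
  rw [sum_congr rfl fun m _ => hterm m, ← sum_filter_add_sum_filter_not s (fun m => (m : ℝ) ≤ r)]
  calc _ ≤ (1 + Real.log (1 + r)) * (1 + r) ^ (-(d : ℝ)) + 2 * (1 + r) ^ (-(d : ℝ)) :=
        add_le_add (sum_inv_mul_rpow_neg_max_le_of_le hr _ fun m hm => (mem_filter.1 hm).2)
          (sum_inv_mul_rpow_neg_max_le_of_lt hd hr _ fun m hm => not_le.1 (mem_filter.1 hm).2)
    _ ≤ 6 * (1 + r) ^ (-(d : ℝ)) * Real.log (2 + r) := by nlinarith

section Box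

variable {ι : Type*} [Fintype ι] [DecidableEq ι]

lemma mem_Icc_neg_natCast_iff {N : ℕ} {k : ι → ℤ} : k ∈ Icc (-N : ι → ℤ) N ↔ ‖k‖ ≤ N := by
  rw [mem_Icc, pi_norm_le_iff_of_nonneg (Nat.cast_nonneg N), Pi.le_def, Pi.le_def, ← forall_and]
  refine forall_congr' fun i => ?_
  rw [Int.norm_eq_abs, abs_le]
  norm_cast

lemma monotone_Icc_neg_natCast : Monotone fun N : ℕ => Icc (-N : ι → ℤ) N := fun _ _ h _ hk =>
  mem_Icc_neg_natCast_iff.2 ((mem_Icc_neg_natCast_iff.1 hk).trans (Nat.cast_le.2 h))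

lemma card_Icc_neg_natCast (N : ℕ) : #(Icc (-N : ι → ℤ) N) = (2 * N + 1) ^ Fintype.card ι := by
  rw [Pi.card_Icc]
  simp only [Pi.neg_apply, Pi.natCast_apply, Int.card_Icc, prod_const, card_univ]
  congr 1
  omega

lemma card_Icc_neg_natCast_succ_sdiff_le (n : ℕ) :
    #(Icc (-(n + 1 : ℕ) : ι → ℤ) (n + 1 : ℕ) \ Icc (-n : ι → ℤ) n) ≤
      Fintype.card ι * 2 ^ Fintype.card ι * (n + 2) ^ (Fintype.card ι - 1) := by
  set d := Fintype.card ι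
  rw [card_sdiff_of_subset (monotone_Icc_neg_natCast n.le_succ), card_Icc_neg_natCast,
    card_Icc_neg_natCast]
  have hdiff : (2 * (n + 1) + 1) ^ d - (2 * n + 1) ^ d ≤ 2 * d * (2 * n + 3) ^ (d - 1) := by
    grind [abs_pow_sub_pow_le (α := ℤ) (2 * n + 3) (2 * n + 1) d]
  have hbase : d * (2 * (2 * n + 3) ^ (d - 1)) ≤ d * (2 ^ d * (n + 2) ^ (d - 1)) := by
    rcases Nat.eq_zero_or_pos d with hd | hd
    · simp [hd]
    rw [← Nat.two_pow_pred_mul_two hd, mul_comm (2 ^ (d - 1)), mul_assoc, ← mul_pow]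
    exact Nat.mul_le_mul_left _ (Nat.mul_le_mul_left 2 (Nat.pow_le_pow_left (by omega) _))
  calc _ ≤ 2 * d * (2 * n + 3) ^ (d - 1) := hdiff
    _ = d * (2 * (2 * n + 3) ^ (d - 1)) := by ring
    _ ≤ d * (2 ^ d * (n + 2) ^ (d - 1)) := hbase
    _ = _ := by ring

lemma exists_subset_Icc_neg_natCast (t : Finset (ι → ℤ)) : ∃ N : ℕ, t ⊆ Icc (-N : ι → ℤ) N :=
  ⟨t.sup fun k => ⌈‖k‖⌉₊, fun _ hk => mem_Icc_neg_natCast_iff.2 <|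
    (Nat.le_ceil _).trans (Nat.cast_le.2 (le_sup (f := fun k => ⌈‖k‖⌉₊) hk))⟩

lemma norm_ge_of_mem_Icc_succ_sdiff {n : ℕ} {k : ι → ℤ}
    (hk : k ∈ Icc (-(n + 1 : ℕ) : ι → ℤ) (n + 1 : ℕ) \ Icc (-n : ι → ℤ) n) :
    (n + 1 : ℝ) ≤ ‖k‖ := by
  have hout := (mem_sdiff.1 hk).2
  rw [mem_Icc_neg_natCast_iff, pi_norm_le_iff_of_nonneg (Nat.cast_nonneg n)] at hout
  simp only [not_forall, not_le] at hout
  obtain ⟨i, hi⟩ := hout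
  rw [Int.norm_eq_abs] at hi
  have hi' : (n : ℤ) < |k i| := by exact_mod_cast hi
  calc (n + 1 : ℝ) ≤ |(k i : ℝ)| := by exact_mod_cast hi'
    _ = ‖k i‖ := (Int.norm_eq_abs _).symm
    _ ≤ ‖k‖ := norm_le_pi_norm k i

lemma sum_Icc_neg_natCast_le [Nonempty ι] {φ : ℝ → ℝ} (hφ : AntitoneOn φ (Set.Ici 0))
    (hφ0 : ∀ x, 0 ≤ x → 0 ≤ φ x) (N : ℕ) :
    ∑ k ∈ Icc (-N : ι → ℤ) N, φ ‖k‖ ≤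
      Fintype.card ι * 2 ^ Fintype.card ι *
        ∑ m ∈ range (N + 1), (1 + (m : ℝ)) ^ (Fintype.card ι - 1) * φ m := by
  set d := Fintype.card ι
  have hd : (1 : ℝ) ≤ d * 2 ^ d := by
    have : (1 : ℝ) ≤ d := Nat.one_le_cast.2 Fintype.card_pos
    nlinarith [one_le_pow₀ (M₀ := ℝ) (a := 2) (n := d) (by norm_num)]
  have hshell (n : ℕ) : ∑ k ∈ Icc (-(n + 1 : ℕ) : ι → ℤ) (n + 1 : ℕ) \ Icc (-n : ι → ℤ) n, φ ‖k‖ ≤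
      d * 2 ^ d * ((1 + ((n + 1 : ℕ) : ℝ)) ^ (d - 1) * φ (n + 1 : ℕ)) := by
    calc _ ≤ #(Icc (-(n + 1 : ℕ) : ι → ℤ) (n + 1 : ℕ) \ Icc (-n : ι → ℤ) n) • φ (n + 1 : ℕ) := by
          refine sum_le_card_nsmul _ _ _ fun k hk => hφ (Set.mem_Ici.2 (Nat.cast_nonneg _))
            (norm_nonneg k) ?_
          exact_mod_cast norm_ge_of_mem_Icc_succ_sdiff hk
      _ ≤ ((d * 2 ^ d * (n + 2) ^ (d - 1) : ℕ) : ℝ) * φ (n + 1 : ℕ) := by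
          rw [nsmul_eq_mul]
          gcongr
          · exact hφ0 _ (Nat.cast_nonneg _)
          · exact card_Icc_neg_natCast_succ_sdiff_le n
      _ = _ := by push_cast; ring
  rw [sum_eq_sum_range_sdiff _ monotone_Icc_neg_natCast, sum_range_succ', mul_add, add_comm]
  refine add_le_add ?_ ?_
  · rw [mul_sum]
    exact sum_le_sum fun n _ => hshell n
  · simp only [Nat.cast_zero, neg_zero, Icc_self, sum_singleton, norm_zero, add_zero, one_pow,
      one_mul]
    exact le_mul_of_one_le_left (hφ0 0 le_rfl) hd

lemma sum_le_of_forall_sum_range_le [Nonempty ι] {φ : ℝ → ℝ} (hφ : AntitoneOn φ (Set.Ici 0))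
    (hφ0 : ∀ x, 0 ≤ x → 0 ≤ φ x) {B : ℝ}
    (hB : ∀ N, ∑ m ∈ range N, (1 + (m : ℝ)) ^ (Fintype.card ι - 1) * φ m ≤ B)
    (t : Finset (ι → ℤ)) :
    ∑ k ∈ t, φ ‖k‖ ≤ Fintype.card ι * 2 ^ Fintype.card ι * B := by
  obtain ⟨N, hN⟩ := exists_subset_Icc_neg_natCast t
  calc ∑ k ∈ t, φ ‖k‖ ≤ ∑ k ∈ Icc (-N : ι → ℤ) N, φ ‖k‖ :=
        sum_le_sum_of_subset_of_nonneg hN fun k _ _ => hφ0 _ (norm_nonneg k)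
    _ ≤ _ := (sum_Icc_neg_natCast_le hφ hφ0 N).trans (by gcongr; exact hB _)

end Box

lemma one_add_znorm_rpow_mul_le {d : ℕ} {r : ℝ} {ℓ : Fin d → ℤ} (hℓ : 2 * r ≤ znorm ℓ)
    (k : Fin d → ℤ) :
    (1 + znorm k) ^ (-(d : ℝ)) * (1 + znorm (ℓ - k)) ^ (-(d : ℝ)) ≤
      radialMajorant d r ‖k‖ + radialMajorant d r ‖ℓ - k‖ := by
  have htri : znorm ℓ ≤ znorm k + znorm (ℓ - k) := by
    simpa using znorm_add_le k (ℓ - k)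
  have hψ := antitoneOn_radialMajorant (p := d) (r := r) (Nat.cast_nonneg d)
  calc _ ≤ radialMajorant d r (znorm k) + radialMajorant d r (znorm (ℓ - k)) :=
        rpow_neg_mul_rpow_neg_le_radialMajorant_add (Nat.cast_nonneg d) (znorm_nonneg k)
          (znorm_nonneg _) (hℓ.trans htri)
    _ ≤ _ := add_le_add (hψ (norm_nonneg k) (znorm_nonneg k) (norm_le_znorm k))
        (hψ (norm_nonneg _) (znorm_nonneg _) (norm_le_znorm _))

/-- **Discrete convolution estimate, borderline case `p = d`**: there is `C > 0`, depending
only on `d`, such that for all `r > 0` and all `ℓ ∈ ℤ^d` with `|ℓ| ≥ 2r`,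
`∑_{k ∈ ℤ^d} (1+|k|)^{-d} (1+|ℓ−k|)^{-d} ≤ C (1+r)^{-d} log(2+r)`. -/
theorem stmt4 (d : ℕ) (hd : 1 ≤ d) :
    ∃ C : ℝ, 0 < C ∧ ∀ r : ℝ, 0 < r → ∀ ℓ : Fin d → ℤ, 2 * r ≤ znorm ℓ →
      (∑' k : Fin d → ℤ, (1 + znorm k) ^ (-(d : ℝ)) * (1 + znorm (ℓ - k)) ^ (-(d : ℝ)))
        ≤ C * (1 + r) ^ (-(d : ℝ)) * Real.log (2 + r) := by
  refine ⟨2 * (d * 2 ^ d * 6), by positivity, fun r hr ℓ hℓ => ?_⟩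
  have : Nonempty (Fin d) := ⟨⟨0, hd⟩⟩
  set B := 6 * (1 + r) ^ (-(d : ℝ)) * Real.log (2 + r)
  have hsum (t : Finset (Fin d → ℤ)) : ∑ k ∈ t, radialMajorant d r ‖k‖ ≤ d * 2 ^ d * B := by
    simpa using sum_le_of_forall_sum_range_le (antitoneOn_radialMajorant (Nat.cast_nonneg d))
      (fun _ hx => radialMajorant_nonneg hx)
      (fun N => by simpa only [Fintype.card_fin] using
        sum_pow_mul_radialMajorant_le hd hr.le (range N)) t
  have hrpow : 0 ≤ (1 + r) ^ (-(d : ℝ)) := Real.rpow_nonneg (by linarith) _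
  have hlog : 0 ≤ Real.log (2 + r) := Real.log_nonneg (by linarith)
  refine tsum_le_of_sum_le' (mul_nonneg (mul_nonneg (by positivity) hrpow) hlog) fun t => ?_
  calc _ ≤ ∑ k ∈ t, (radialMajorant d r ‖k‖ + radialMajorant d r ‖ℓ - k‖) :=
        sum_le_sum fun k _ => one_add_znorm_rpow_mul_le hℓ k
    _ = ∑ k ∈ t, radialMajorant d r ‖k‖ + ∑ k ∈ t.image (ℓ - ·), radialMajorant d r ‖k‖ := by
        rw [sum_add_distrib, sum_image fun _ _ _ _ h => sub_right_injective h]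
    _ ≤ d * 2 ^ d * B + d * 2 ^ d * B := add_le_add (hsum t) (hsum _)
    _ = _ := by ring
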